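/- For every odd positive integer n ≥ 3 with n ≡ 0 (mod 3) such that 2n−1 is prime, the labeling of GP(n,1) given by v_i ↦ i for 1 ≤ i ≤ n−1, v_n ↦ 2n−1, u_i ↦ 2n−1−i for 1 ≤ i ≤ n−1, and u_n ↦ 2n+1, is injective with values in {1,...,2n+1} and assigns coprime labels to every pair of adjacent vertices. -/

import Mathlib

/-- The prism graph `GP(n,1)`: two `n`-cycles `v` (inl) and `u` (inr) joined by a
perfect matching. -/
def prismGraph (n : ℕ) : SimpleGraph (ZMod n ⊕ ZMod n) :=
  SimpleGraph.fromRel (fun x y =>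
    (∃ i : ZMod n, x = Sum.inl i ∧ y = Sum.inl (i + 1)) ∨
    (∃ i : ZMod n, x = Sum.inr i ∧ y = Sum.inr (i + 1)) ∨
    (∃ i : ZMod n, x = Sum.inl i ∧ y = Sum.inr i))

/-- The labeling of Theorem (2n-1 prime, n ≡ 0 mod 3): `v_i ↦ i` for `i ≤ n-1`,
`v_n ↦ 2n-1`; `u_i ↦ 2n-1-i` for `i ≤ n-1`, `u_n ↦ 2n+1`
(vertex of value `j` represents index `j+1`). -/
def prismLabel18 (n : ℕ) : ZMod n ⊕ ZMod n → ℕ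
  | Sum.inl i => if i.val = n - 1 then 2 * n - 1 else i.val + 1
  | Sum.inr i => if i.val = n - 1 then 2 * n + 1 else 2 * n - 1 - (i.val + 1)

/-!
The labels of `v_i` and `u_i` sum to the prime `2n - 1`, so every rung is coprime. Along the two
cycles consecutive labels differ by one, except at the four edges through `v_n` and `u_n`. There
the pairs are `(2n - 1, 1)`, then `(n - 1, 2n - 1)` and `(n, 2n + 1)`, both of the shape
`(a, 2a + 1)`, and finally `(2n + 1, 2n - 2)`, which differ by the prime `3`, and `3 ∤ 2n - 2`
because `3 ∣ n`. The last rung joins the odd numbers `2n - 1` and `2n + 1`.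
-/

namespace Nat

theorem coprime_self_add_one (a : ℕ) : Coprime a (a + 1) :=
  coprime_self_add_right.mpr (coprime_one_right a)

theorem coprime_two_mul_add_one (a : ℕ) : Coprime a (2 * a + 1) :=
  (coprime_mul_right_add_right a 1 2).mpr (coprime_one_right a)

theorem Prime.coprime_self_add_of_not_dvd {p a : ℕ} (hp : p.Prime) (h : ¬p ∣ a) :
    Coprime a (a + p) :=
  coprime_self_add_right.mpr (hp.coprime_iff_not_dvd.mpr h).symm

theorem Prime.coprime_sub_of_lt {p a : ℕ} (hp : p.Prime) (ha : a ≠ 0) (hap : a < p) :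
    Coprime a (p - a) :=
  (coprime_sub_self_right hap.le).mpr (coprime_of_lt_prime ha hap hp).symm

end Nat

namespace ZMod

variable {n : ℕ} [Fact (1 < n)] {i : ZMod n}

theorem val_add_one_of_val_ne (h : i.val ≠ n - 1) : (i + 1).val = i.val + 1 := by
  have := i.val_lt
  rw [val_add, val_one, Nat.mod_eq_of_lt (by omega)]

theorem val_add_one_of_val_eq (h : i.val = n - 1) : (i + 1).val = 0 := by
  have := (Fact.out : 1 < n)
  rw [val_add, val_one, h, Nat.sub_add_cancel (by omega), Nat.mod_self]

end ZMod

section Prism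

open Sum

variable {n : ℕ}

theorem forall_prismGraph_adj {P : ZMod n ⊕ ZMod n → ZMod n ⊕ ZMod n → Prop}
    (hP : ∀ x y, P x y → P y x)
    (hv : ∀ i, P (inl i) (inl (i + 1))) (hu : ∀ i, P (inr i) (inr (i + 1)))
    (hvu : ∀ i, P (inl i) (inr i)) {x y : ZMod n ⊕ ZMod n} (h : (prismGraph n).Adj x y) :
    P x y := by
  have hrel : ∀ x y : ZMod n ⊕ ZMod n, ((∃ i, x = inl i ∧ y = inl (i + 1)) ∨
      (∃ i, x = inr i ∧ y = inr (i + 1)) ∨ (∃ i, x = inl i ∧ y = inr i)) → P x y := by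
    rintro x y (⟨i, rfl, rfl⟩ | ⟨i, rfl, rfl⟩ | ⟨i, rfl, rfl⟩)
    exacts [hv i, hu i, hvu i]
  rw [prismGraph, SimpleGraph.fromRel_adj] at h
  rcases h.2 with h | h
  exacts [hrel x y h, hP _ _ (hrel y x h)]

variable {i : ZMod n}

theorem prismLabel18_inl_of_val_eq (h : i.val = n - 1) :
    prismLabel18 n (inl i) = 2 * n - 1 := if_pos h

theorem prismLabel18_inl_of_val_ne (h : i.val ≠ n - 1) :
    prismLabel18 n (inl i) = i.val + 1 := if_neg h

theorem prismLabel18_inr_of_val_eq (h : i.val = n - 1) :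
    prismLabel18 n (inr i) = 2 * n + 1 := if_pos h

theorem prismLabel18_inr_of_val_ne (h : i.val ≠ n - 1) :
    prismLabel18 n (inr i) = 2 * n - 1 - (i.val + 1) := if_neg h

theorem prismLabel18_injective [NeZero n] : Function.Injective (prismLabel18 n) := by
  have hval := @ZMod.val_injective n _
  rintro (i | i) (j | j) h <;> have := i.val_lt <;> have := j.val_lt <;>
    simp only [prismLabel18] at h
  · exact congrArg inl (hval (by split_ifs at h <;> omega))
  · split_ifs at h <;> omega
  · split_ifs at h <;> omega
  · exact congrArg inr (hval (by split_ifs at h <;> omega))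

theorem prismLabel18_mem_Icc [NeZero n] (x : ZMod n ⊕ ZMod n) :
    prismLabel18 n x ∈ Finset.Icc 1 (2 * n + 1) := by
  have := NeZero.pos n
  rcases x with i | i <;> have := i.val_lt <;> simp only [prismLabel18, Finset.mem_Icc] <;>
    split_ifs <;> omega

variable [Fact (1 < n)] (i : ZMod n)

theorem coprime_prismLabel18_inl_add_one :
    (prismLabel18 n (inl i)).Coprime (prismLabel18 n (inl (i + 1))) := by
  have := i.val_lt
  by_cases hi : i.val = n - 1
  · have hi' := ZMod.val_add_one_of_val_eq hi
    have hn : 1 < n := Fact.out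
    rw [prismLabel18_inl_of_val_eq hi, prismLabel18_inl_of_val_ne (by omega), hi']
    exact Nat.coprime_one_right _
  have hi' := ZMod.val_add_one_of_val_ne hi
  rw [prismLabel18_inl_of_val_ne hi]
  by_cases hi₁ : i.val + 1 = n - 1
  · rw [prismLabel18_inl_of_val_eq (by omega), show 2 * n - 1 = 2 * (i.val + 1) + 1 by omega]
    exact Nat.coprime_two_mul_add_one _
  · rw [prismLabel18_inl_of_val_ne (by omega), hi']
    exact Nat.coprime_self_add_one _

theorem coprime_prismLabel18_inr_add_one (h3 : 3 ∣ n) :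
    (prismLabel18 n (inr i)).Coprime (prismLabel18 n (inr (i + 1))) := by
  have := i.val_lt
  have hn : 1 < n := Fact.out
  by_cases hi : i.val = n - 1
  · have hi' := ZMod.val_add_one_of_val_eq hi
    rw [prismLabel18_inr_of_val_eq hi, prismLabel18_inr_of_val_ne (by omega), hi',
      show 2 * n + 1 = (2 * n - 1 - (0 + 1)) + 3 by omega]
    exact (Nat.prime_three.coprime_self_add_of_not_dvd (by omega)).symm
  have hi' := ZMod.val_add_one_of_val_ne hi
  rw [prismLabel18_inr_of_val_ne hi]
  by_cases hi₁ : i.val + 1 = n - 1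
  · rw [prismLabel18_inr_of_val_eq (by omega),
      show 2 * n + 1 = 2 * (2 * n - 1 - (i.val + 1)) + 1 by omega]
    exact Nat.coprime_two_mul_add_one _
  · rw [prismLabel18_inr_of_val_ne (by omega), hi',
      show 2 * n - 1 - (i.val + 1) = (2 * n - 1 - (i.val + 1 + 1)) + 1 by omega]
    exact (Nat.coprime_self_add_one _).symm

theorem coprime_prismLabel18_inl_inr (hp : (2 * n - 1).Prime) :
    (prismLabel18 n (inl i)).Coprime (prismLabel18 n (inr i)) := by
  have := i.val_lt
  by_cases hi : i.val = n - 1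
  · rw [prismLabel18_inl_of_val_eq hi, prismLabel18_inr_of_val_eq hi,
      show 2 * n + 1 = 2 * n - 1 + 2 by omega]
    exact Nat.prime_two.coprime_self_add_of_not_dvd (by omega)
  · rw [prismLabel18_inl_of_val_ne hi, prismLabel18_inr_of_val_ne hi]
    exact hp.coprime_sub_of_lt (by omega) (by omega)

end Prism

theorem prism_coprime_labeling_of_twoNSubOne_prime_general (n : ℕ) (hn : 3 ≤ n)
    (h3 : n % 3 = 0) (hp : Nat.Prime (2 * n - 1)) :
    Function.Injective (prismLabel18 n) ∧
    (∀ x, prismLabel18 n x ∈ Finset.Icc 1 (2 * n + 1)) ∧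
    (∀ x y, (prismGraph n).Adj x y →
      Nat.Coprime (prismLabel18 n x) (prismLabel18 n y)) := by
  have : Fact (1 < n) := ⟨by omega⟩
  refine ⟨prismLabel18_injective, prismLabel18_mem_Icc, fun x y => ?_⟩
  exact forall_prismGraph_adj (P := fun x y => (prismLabel18 n x).Coprime (prismLabel18 n y))
    (fun _ _ => Nat.Coprime.symm) coprime_prismLabel18_inl_add_one
    (coprime_prismLabel18_inr_add_one · (Nat.dvd_of_mod_eq_zero h3))
    (coprime_prismLabel18_inl_inr · hp)

theorem prism_coprime_labeling_of_twoNSubOne_prime (n : ℕ) (hn : 3 ≤ n)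
    (hodd : Odd n) (h3 : n % 3 = 0) (hp : Nat.Prime (2 * n - 1)) :
    Function.Injective (prismLabel18 n) ∧
    (∀ x, prismLabel18 n x ∈ Finset.Icc 1 (2 * n + 1)) ∧
    (∀ x y, (prismGraph n).Adj x y →
      Nat.Coprime (prismLabel18 n x) (prismLabel18 n y)) :=
  prism_coprime_labeling_of_twoNSubOne_prime_general n hn h3 hp
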